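/- arXiv:1208.3167 — 6 statements merged into one kernel-verified Lean document; each statement's English description precedes it below -/
import Mathlib

section
/- Let S = ⟨e, a₁, …, a_t⟩ with blowup B and generating set D = {e, d₁, …, d_t}, dᵢ = aᵢ − e. If (y₀, y₁, …, y_t) is a D-factorization of s − re with length |y| ≤ r (where s ∈ S, r ∈ ℕ), then (2y₀ + r − |y|, y₁, …, y_t) is an S-factorization of s of length r + y₀; in particular ord(s; S) ≥ r. -/
open Finset

/-- The set of factorizations of `n` over the generating tuple `g`. -/
def Fac {t : ℕ} (g : Fin (t + 1) → ℕ) (n : ℕ) : Set (Fin (t + 1) → ℕ) :=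
  {c | ∑ i, c i * g i = n}

/-- The numerical semigroup generated by the tuple `g`. -/
def Sg {t : ℕ} (g : Fin (t + 1) → ℕ) : Set ℕ :=
  {n | ∃ c : Fin (t + 1) → ℕ, ∑ i, c i * g i = n}

/-- The order of `n`: the maximal length of a factorization of `n` over `g`. -/
noncomputable def ordOf {t : ℕ} (g : Fin (t + 1) → ℕ) (n : ℕ) : ℕ :=
  sSup {r | ∃ c ∈ Fac g n, ∑ i, c i = r}

/-- The minimal length of a factorization of `n` over `g`. -/
noncomputable def minordOf {t : ℕ} (g : Fin (t + 1) → ℕ) (n : ℕ) : ℕ :=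
  sInf {r | ∃ c ∈ Fac g n, ∑ i, c i = r}

/-- The denumerant of `n` with respect to `g`. -/
noncomputable def denum {t : ℕ} (g : Fin (t + 1) → ℕ) (n : ℕ) : ℕ :=
  (Fac g n).ncard

/-- The maximal denumerant of an element: the number of maximal-length factorizations. -/
noncomputable def dmaxEl {t : ℕ} (g : Fin (t + 1) → ℕ) (n : ℕ) : ℕ :=
  {c ∈ Fac g n | ∑ i, c i = ordOf g n}.ncard

/-- The maximal denumerant of the semigroup generated by `g`. -/
noncomputable def dmax {t : ℕ} (g : Fin (t + 1) → ℕ) : ℕ :=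
  sSup {m | ∃ n ∈ Sg g, dmaxEl g n = m}

/-- The generating tuple `D` of the blowup: `{e, a₁ - e, …, a_t - e}`. -/
def blowD {t : ℕ} (g : Fin (t + 1) → ℕ) : Fin (t + 1) → ℕ :=
  fun i => if i = 0 then g 0 else g i - g 0

/-- The adjustment of `n`:  `n - ord(n) * e`. -/
noncomputable def adj {t : ℕ} (g : Fin (t + 1) → ℕ) (n : ℕ) : ℕ :=
  n - ordOf g n * g 0

/-- The Apery set with respect to `u` of the semigroup generated by `g`. -/
def Ap {t : ℕ} (g : Fin (t + 1) → ℕ) (u : ℕ) : Set ℕ :=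
  {w ∈ Sg g | ¬ ∃ b ∈ Sg g, w = b + u}

/-- `g` is the (strictly increasing) minimal generating tuple of a numerical semigroup
with multiplicity `g 0`. -/
structure IsNumSgp {t : ℕ} (g : Fin (t + 1) → ℕ) : Prop where
  mono : StrictMono g
  pos : 0 < g 0
  gcd_eq_one : Finset.gcd Finset.univ g = 1
  minimal : ∀ i, ∀ c : Fin (t + 1) → ℕ, ∑ j, c j * g j = g i → c = Pi.single i 1

/-- `S` is additive: `ord(u + e) = ord(u) + 1` for all `u ∈ S`. -/
def IsAdditive {t : ℕ} (g : Fin (t + 1) → ℕ) : Prop :=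
  ∀ u ∈ Sg g, ordOf g (u + g 0) = ordOf g u + 1

/-- Membership of an integer in a set of naturals. -/
def ZMem (T : Set ℕ) (z : ℤ) : Prop := 0 ≤ z ∧ z.toNat ∈ T

/-- The Frobenius number: the largest integer not in `T`. -/
noncomputable def Frob (T : Set ℕ) : ℤ := sSup {z : ℤ | ¬ ZMem T z}

/-- `T` is symmetric: whenever `x + y = F(T)`, exactly one of `x`, `y` lies in `T`. -/
def Symm (T : Set ℕ) : Prop := ∀ x y : ℤ, x + y = Frob T → (ZMem T x ↔ ¬ ZMem T y)

/-- An abstract numerical semigroup. -/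
structure IsNumSemigroup (T : Set ℕ) : Prop where
  zero_mem : 0 ∈ T
  add_mem : ∀ a ∈ T, ∀ b ∈ T, a + b ∈ T
  cofinite : Tᶜ.Finite

/-- The Apery set of an abstract numerical semigroup. -/
def ApS (T : Set ℕ) (u : ℕ) : Set ℕ := {w ∈ T | ¬ ∃ b ∈ T, w = b + u}

/-! Since `dᵢ + e = aᵢ`, reading a `D`-factorization `y` of `s - r e` over `S` factors
`s - r e + (|y| - y₀) e`; the missing `r - |y| + y₀` copies of `e` are then added to the
`e`-coordinate, giving a factorization of `s` of length `r + y₀`. -/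

theorem IsNumSgp.apply_zero_le {t : ℕ} {g : Fin (t + 1) → ℕ} (hS : IsNumSgp g)
    (i : Fin (t + 1)) :
    g 0 ≤ g i :=
  hS.mono.monotone (Fin.zero_le i)

theorem IsNumSgp.apply_pos {t : ℕ} {g : Fin (t + 1) → ℕ} (hS : IsNumSgp g)
    (i : Fin (t + 1)) :
    0 < g i :=
  hS.pos.trans_le (hS.apply_zero_le i)

section Factorizations

variable {t : ℕ} {g : Fin (t + 1) → ℕ}

theorem add_single_mem_Fac {c : Fin (t + 1) → ℕ} {n : ℕ} (hc : c ∈ Fac g n)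
    (i : Fin (t + 1)) (k : ℕ) : c + Pi.single i k ∈ Fac g (n + k * g i) := by
  simp only [Fac, Set.mem_ofPred_eq, Pi.add_apply, add_mul, Finset.sum_add_distrib] at hc ⊢
  simp [hc, Pi.single_apply]

theorem mem_Fac_of_mem_Fac_blowD (hg : ∀ i, g 0 ≤ g i) {y : Fin (t + 1) → ℕ} {m : ℕ}
    (hy : y ∈ Fac (blowD g) m) : y ∈ Fac g (m + (∑ i, y i - y 0) * g 0) := by
  simp only [Fac, Set.mem_ofPred_eq, Fin.sum_univ_succ, blowD] at hy ⊢
  simp only [if_pos, Fin.succ_ne_zero, if_false] at hy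
  rw [← hy, Nat.add_sub_cancel_left, Finset.sum_mul, add_assoc, ← Finset.sum_add_distrib]
  congr 1
  refine Finset.sum_congr rfl fun i _ => ?_
  rw [← Nat.mul_add, Nat.sub_add_cancel (hg i.succ)]

theorem le_ordOf (hg : ∀ i, 0 < g i) {c : Fin (t + 1) → ℕ} {n : ℕ} (hc : c ∈ Fac g n) :
    ∑ i, c i ≤ ordOf g n := by
  refine le_csSup ⟨n, ?_⟩ ⟨c, hc, rfl⟩
  rintro _ ⟨c', hc', rfl⟩
  rw [← hc']
  exact Finset.sum_le_sum fun i _ => Nat.le_mul_of_pos_right _ (hg i)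

end Factorizations

theorem stmt1_general {t : ℕ} (g : Fin (t + 1) → ℕ) (hS : IsNumSgp g)
    (s r : ℕ) (hre : r * g 0 ≤ s)
    (y : Fin (t + 1) → ℕ) (hy : y ∈ Fac (blowD g) (s - r * g 0))
    (hlen : ∑ i, y i ≤ r) :
    Function.update y 0 (2 * y 0 + r - ∑ i, y i) ∈ Fac g s ∧
      (∑ i, Function.update y 0 (2 * y 0 + r - ∑ i, y i) i) = r + y 0 ∧
      r ≤ ordOf g s := by
  have hy0 : y 0 ≤ ∑ i, y i := Finset.single_le_sum (fun i _ => Nat.zero_le (y i)) (mem_univ 0)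
  set k := y 0 + r - ∑ i, y i
  have hupdate : Function.update y 0 (2 * y 0 + r - ∑ i, y i) = y + Pi.single 0 k := by
    ext i
    rcases eq_or_ne i 0 with rfl | hi
    · simp only [Function.update_self, Pi.add_apply, Pi.single_eq_same]; omega
    · simp [hi]
  have hfac : y + Pi.single 0 k ∈ Fac g s := by
    have h := add_single_mem_Fac
      (mem_Fac_of_mem_Fac_blowD hS.apply_zero_le hy) 0 k
    have hr : ∑ i, y i - y 0 + k = r := by omega
    rwa [add_assoc, ← add_mul, hr, Nat.sub_add_cancel hre] at h
  have hlength : ∑ i, (y + Pi.single 0 k : Fin (t + 1) → ℕ) i = r + y 0 := by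
    simp only [Pi.add_apply, Finset.sum_add_distrib, Finset.sum_pi_single', mem_univ, if_true]
    omega
  rw [hupdate]
  refine ⟨hfac, hlength, ?_⟩
  calc r ≤ r + y 0 := Nat.le_add_right r (y 0)
    _ = _ := hlength.symm
    _ ≤ ordOf g s := le_ordOf hS.apply_pos hfac

/-- Lemma 2.2(2). -/
theorem stmt1 {t : ℕ} (g : Fin (t + 1) → ℕ) (hS : IsNumSgp g)
    (s r : ℕ) (hs : s ∈ Sg g) (hre : r * g 0 ≤ s)
    (y : Fin (t + 1) → ℕ) (hy : y ∈ Fac (blowD g) (s - r * g 0))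
    (hlen : ∑ i, y i ≤ r) :
    Function.update y 0 (2 * y 0 + r - ∑ i, y i) ∈ Fac g s ∧
      (∑ i, Function.update y 0 (2 * y 0 + r - ∑ i, y i) i) = r + y 0 ∧
      r ≤ ordOf g s :=
  stmt1_general g hS s r hre y hy hlen
end

section
/- Let S be a numerical semigroup with multiplicity e, blowup B and generating set D. For s ∈ S, define adj(s) = s − ord(s;S)·e. If (x₀, x₁, …, x_t) is a D-factorization of adj(s) with length at most ord(s;S), then x₀ = 0. -/
open Finset

/-
Write `e = g 0` and `N = ord(s)`. A `D`-factorization `x` of `s - N e` with `x₀ + L ≤ N`, where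
`L = x₁ + ⋯ + x_t`, lifts to a factorization of `s` over `g`: keep `x₁, …, x_t` (each `aᵢ - e`
becomes `aᵢ` at the cost of `L` copies of `e`) and take `N + x₀ - L` copies of `e`. Its length is
`N + x₀`, so maximality of `N` forces `x₀ = 0`.
-/

section Factorizations

variable {t : ℕ} {g : Fin (t + 1) → ℕ}

lemma sum_le_of_mem_Fac (hpos : ∀ i, 0 < g i) {n : ℕ} {c : Fin (t + 1) → ℕ}
    (hc : c ∈ Fac g n) : ∑ i, c i ≤ n :=
  calc ∑ i, c i ≤ ∑ i, c i * g i :=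
        sum_le_sum fun i _ => Nat.le_mul_of_pos_right _ (hpos i)
    _ = n := hc

lemma sum_mul_le_of_mem_Fac (hmin : ∀ i, g 0 ≤ g i) {n : ℕ} {c : Fin (t + 1) → ℕ}
    (hc : c ∈ Fac g n) : (∑ i, c i) * g 0 ≤ n :=
  calc (∑ i, c i) * g 0 = ∑ i, c i * g 0 := sum_mul ..
    _ ≤ ∑ i, c i * g i := sum_le_sum fun i _ => Nat.mul_le_mul_left _ (hmin i)
    _ = n := hc

lemma bddAbove_lengths (hpos : ∀ i, 0 < g i) (n : ℕ) :
    BddAbove {r | ∃ c ∈ Fac g n, ∑ i, c i = r} := by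
  refine ⟨n, ?_⟩
  rintro _ ⟨c, hc, rfl⟩
  exact sum_le_of_mem_Fac hpos hc

lemma sum_le_ordOf (hpos : ∀ i, 0 < g i) {n : ℕ} {c : Fin (t + 1) → ℕ}
    (hc : c ∈ Fac g n) : ∑ i, c i ≤ ordOf g n :=
  le_csSup (bddAbove_lengths hpos n) ⟨c, hc, rfl⟩

lemma ordOf_mul_le (hpos : ∀ i, 0 < g i) (hmin : ∀ i, g 0 ≤ g i) (n : ℕ) :
    ordOf g n * g 0 ≤ n := by
  rcases Set.eq_empty_or_nonempty {r | ∃ c ∈ Fac g n, ∑ i, c i = r} with hA | hA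
  · simp [ordOf, hA]
  · obtain ⟨c, hc, hcN⟩ := Nat.sSup_mem hA (bddAbove_lengths hpos n)
    rw [ordOf, ← hcN]
    exact sum_mul_le_of_mem_Fac hmin hc

/-- Restoring each shifted generator `aᵢ - e` to `aᵢ` uses up `L = x₁ + ⋯ + x_t` of the `k`
extra copies of `e = g 0`; the rest join the `x₀` copies already present. -/
lemma cons_mem_Fac_of_mem_Fac_blowD (hmin : ∀ i, g 0 ≤ g i) {m k : ℕ}
    {x : Fin (t + 1) → ℕ} (hx : x ∈ Fac (blowD g) m) (hk : ∑ i : Fin t, x i.succ ≤ k) :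
    (Fin.cons (k + x 0 - ∑ i : Fin t, x i.succ) (fun i => x i.succ) : Fin (t + 1) → ℕ)
      ∈ Fac g (m + k * g 0) := by
  set L := ∑ i : Fin t, x i.succ
  have hshift : ∑ i : Fin t, x i.succ * g i.succ
      = ∑ i : Fin t, x i.succ * (g i.succ - g 0) + L * g 0 := by
    rw [sum_mul, ← sum_add_distrib]
    refine sum_congr rfl fun i _ => ?_
    rw [← Nat.mul_add, Nat.sub_add_cancel (hmin _)]
  have hm : x 0 * g 0 + ∑ i : Fin t, x i.succ * (g i.succ - g 0) = m := by
    simpa [Fac, blowD, Fin.sum_univ_succ, Fin.succ_ne_zero] using hx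
  have hLk : L * g 0 ≤ k * g 0 := Nat.mul_le_mul_right _ hk
  simp only [Fac, Set.mem_ofPred_eq, Fin.sum_univ_succ, Fin.cons_zero, Fin.cons_succ]
  rw [hshift, Nat.sub_mul, Nat.add_mul]
  omega

end Factorizations

theorem stmt2_general {t : ℕ} (g : Fin (t + 1) → ℕ) (hS : IsNumSgp g)
    (s : ℕ) (x : Fin (t + 1) → ℕ)
    (hx : x ∈ Fac (blowD g) (adj g s)) (hlen : ∑ i, x i ≤ ordOf g s) :
    x 0 = 0 := by
  have hmin : ∀ i, g 0 ≤ g i := fun i => hS.mono.monotone (Fin.zero_le i)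
  have hpos : ∀ i, 0 < g i := fun i => hS.pos.trans_le (hmin i)
  rw [Fin.sum_univ_succ] at hlen
  have hlift := cons_mem_Fac_of_mem_Fac_blowD hmin hx (k := ordOf g s) (by omega)
  rw [adj, Nat.sub_add_cancel (ordOf_mul_le hpos hmin s)] at hlift
  have hmax := sum_le_ordOf hpos hlift
  rw [Fin.sum_univ_succ] at hmax
  simp only [Fin.cons_zero, Fin.cons_succ] at hmax
  omega

/-- Lemma 3.3: any `D`-factorization of `adj s` of length at most `ord s` has first
coordinate zero. -/
theorem stmt2 {t : ℕ} (g : Fin (t + 1) → ℕ) (hS : IsNumSgp g)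
    (s : ℕ) (hs : s ∈ Sg g) (x : Fin (t + 1) → ℕ)
    (hx : x ∈ Fac (blowD g) (adj g s)) (hlen : ∑ i, x i ≤ ordOf g s) :
    x 0 = 0 :=
  stmt2_general g hS s x hx hlen
end

section
/- Let S be a numerical semigroup with multiplicity e and blowup B with generating set D. Let f ∈ Ap(B; e) (the Apéry set of B with respect to e), and set s = f + minord(f; D)·e where minord(f; D) is the minimal length of a D-factorization of f. Then s ∈ S, and for all k ≥ 0, adj(s + ke) = f; that is, ord(s + ke; S) = minord(f; D) + k. -/
open Finset

/-!
Write `e = g 0`. Every `S`-factorization `c` of `n` splits as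
`n = b + (∑ c) e` with `b = ∑_{i ≥ 1} c i (g i - e) ∈ B`. If `f ∈ Ap(B; e)` and `n = f + N e`,
a factorization of length `∑ c > N` would give `f - e = b + (∑ c - N - 1) e ∈ B`; hence
`ord(f + N e) ≤ N`. Conversely, a minimal `D`-factorization of `f` uses no `e` (again since
`f ∈ Ap(B; e)`), so read over `S` and with `k` copies of `e` added it factors
`f + (minord f + k) e` with length `minord f + k`.
-/

section Factorizations

variable {t : ℕ} {g : Fin (t + 1) → ℕ}

lemma sum_mul_blowD (c : Fin (t + 1) → ℕ) :
    ∑ i, c i * blowD g i = c 0 * g 0 + ∑ i : Fin t, c i.succ * (g i.succ - g 0) := by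
  simp [Fin.sum_univ_succ, blowD]

lemma sum_mul_eq_sum_mul_sub_add (hg : Monotone g) (c : Fin (t + 1) → ℕ) :
    ∑ i, c i * g i = ∑ i : Fin t, c i.succ * (g i.succ - g 0) + (∑ i, c i) * g 0 := by
  have hsucc (i : Fin t) : c i.succ * g i.succ = c i.succ * (g i.succ - g 0) + c i.succ * g 0 := by
    rw [← Nat.mul_add, Nat.sub_add_cancel (hg (Fin.zero_le _))]
  simp only [Fin.sum_univ_succ, hsucc, Finset.sum_add_distrib, add_mul, Finset.sum_mul]
  ring

lemma add_sum_mul_sub_mem_Sg_blowD (c : Fin (t + 1) → ℕ) (j : ℕ) :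
    j * g 0 + ∑ i : Fin t, c i.succ * (g i.succ - g 0) ∈ Sg (blowD g) :=
  ⟨Function.update c 0 j, by simp [sum_mul_blowD]⟩

lemma exists_fac_sum_eq_minordOf {n : ℕ} (hn : n ∈ Sg g) :
    ∃ c ∈ Fac g n, ∑ i, c i = minordOf g n := by
  obtain ⟨c, hc⟩ := hn
  exact Nat.sInf_mem (s := {r | ∃ c ∈ Fac g n, ∑ i, c i = r}) ⟨_, c, hc, rfl⟩

lemma ordOf_eq_of_forall_le {n r : ℕ} (hr : ∃ c ∈ Fac g n, ∑ i, c i = r)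
    (hle : ∀ c ∈ Fac g n, ∑ i, c i ≤ r) : ordOf g n = r :=
  IsGreatest.csSup_eq ⟨hr, by rintro _ ⟨c, hc, rfl⟩; exact hle c hc⟩

end Factorizations

section Apery

variable {t : ℕ} {g : Fin (t + 1) → ℕ} {f : ℕ}

lemma apply_zero_eq_zero_of_mem_Ap_blowD (hf : f ∈ Ap (blowD g) (g 0)) {c : Fin (t + 1) → ℕ}
    (hc : c ∈ Fac (blowD g) f) : c 0 = 0 := by
  obtain ⟨-, hfAp⟩ := hf
  by_contra h0
  obtain ⟨j, hj⟩ := Nat.exists_eq_add_one_of_ne_zero h0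
  refine hfAp ⟨_, add_sum_mul_sub_mem_Sg_blowD c j, ?_⟩
  rw [← hc.out, sum_mul_blowD, hj]
  ring

lemma sum_le_of_mem_Ap_blowD (hg : Monotone g) (hf : f ∈ Ap (blowD g) (g 0)) {N : ℕ}
    {c : Fin (t + 1) → ℕ} (hc : c ∈ Fac g (f + N * g 0)) : ∑ i, c i ≤ N := by
  obtain ⟨-, hfAp⟩ := hf
  by_contra! hlt
  obtain ⟨j, hj⟩ := Nat.exists_eq_add_of_lt hlt
  have hsplit := sum_mul_eq_sum_mul_sub_add hg c
  rw [hc.out, hj] at hsplit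
  refine hfAp ⟨_, add_sum_mul_sub_mem_Sg_blowD c j, ?_⟩
  simp only [add_mul, one_mul] at hsplit
  omega

lemma exists_fac_add_mul_of_fac_blowD (hg : Monotone g) {c : Fin (t + 1) → ℕ}
    (hc : c ∈ Fac (blowD g) f) (h0 : c 0 = 0) (k : ℕ) :
    ∃ c' ∈ Fac g (f + (∑ i, c i + k) * g 0), ∑ i, c' i = ∑ i, c i + k := by
  have hsum : ∑ i, Function.update c 0 k i = ∑ i, c i + k := by
    simp [Fin.sum_univ_succ, h0, add_comm]
  refine ⟨_, ?_, hsum⟩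
  have hf : ∑ i : Fin t, c i.succ * (g i.succ - g 0) = f := by
    simpa [sum_mul_blowD, h0] using hc.out
  rw [Fac, Set.mem_ofPred_eq, sum_mul_eq_sum_mul_sub_add hg, hsum, ← hf]
  simp only [Function.update_of_ne (Fin.succ_ne_zero _)]

end Apery

/-- Proposition 3.5(1). -/
theorem stmt4 {t : ℕ} (g : Fin (t + 1) → ℕ) (hS : IsNumSgp g)
    (f : ℕ) (hf : f ∈ Ap (blowD g) (g 0)) :
    f + minordOf (blowD g) f * g 0 ∈ Sg g ∧
      ∀ k : ℕ,
        adj g (f + minordOf (blowD g) f * g 0 + k * g 0) = f ∧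
        ordOf g (f + minordOf (blowD g) f * g 0 + k * g 0) = minordOf (blowD g) f + k := by
  have hg := hS.mono.monotone
  obtain ⟨c, hc, hlen⟩ := exists_fac_sum_eq_minordOf hf.1
  have hfac (k : ℕ) := hlen ▸ exists_fac_add_mul_of_fac_blowD hg hc
    (apply_zero_eq_zero_of_mem_Ap_blowD hf hc) k
  have hord (k : ℕ) :
      ordOf g (f + minordOf (blowD g) f * g 0 + k * g 0) = minordOf (blowD g) f + k := by
    rw [add_assoc, ← add_mul]
    exact ordOf_eq_of_forall_le (hfac k) fun c' hc' => sum_le_of_mem_Ap_blowD hg hf hc'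
  refine ⟨?_, fun k => ⟨?_, hord k⟩⟩
  · obtain ⟨c', hc', -⟩ := hfac 0
    exact ⟨c', by simpa using hc'.out⟩
  · rw [adj, hord k, add_mul, add_assoc, Nat.add_sub_cancel]
end

section
/- Let S be a numerical semigroup, u ∈ S nonzero, and g ∈ Ap(S; u). If there exists g′ ∈ Ap(S;u) with f = g + g′ ∈ Ap(S;u), then for any fixed generating set G of S, the denumerant satisfies d(f; G) ≥ d(g; G). -/
open Finset

/-! Adding a fixed factorization of `b` maps the factorizations of `a` injectively into those
of `a + b`; there are finitely many of the latter because all generators are positive. -/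

theorem fac_subset_Iic {t : ℕ} {g : Fin (t + 1) → ℕ} (hpos : ∀ i, 0 < g i) (n : ℕ) :
    Fac g n ⊆ Set.Iic (fun _ => n) := fun c hc i =>
  calc c i ≤ c i * g i := Nat.le_mul_of_pos_right _ (hpos i)
    _ ≤ ∑ j, c j * g j := Finset.single_le_sum (fun j _ => Nat.zero_le (c j * g j)) (mem_univ i)
    _ = n := hc

theorem fac_finite {t : ℕ} {g : Fin (t + 1) → ℕ} (hpos : ∀ i, 0 < g i) (n : ℕ) :
    (Fac g n).Finite :=
  (Set.finite_Iic _).subset (fac_subset_Iic hpos n)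

theorem add_mem_fac {t : ℕ} {g : Fin (t + 1) → ℕ} {m n : ℕ} {c d : Fin (t + 1) → ℕ}
    (hc : c ∈ Fac g m) (hd : d ∈ Fac g n) : c + d ∈ Fac g (m + n) := by
  simp only [Fac, Set.mem_ofPred_eq, Pi.add_apply, add_mul, sum_add_distrib] at hc hd ⊢
  rw [hc, hd]

theorem denum_le_denum_add {t : ℕ} {g : Fin (t + 1) → ℕ} (hpos : ∀ i, 0 < g i) (m : ℕ)
    {n : ℕ} (hn : n ∈ Sg g) : denum g m ≤ denum g (m + n) := by
  obtain ⟨d, hd⟩ := hn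
  calc denum g m = ((· + d) '' Fac g m).ncard :=
        (Set.ncard_image_of_injective _ (add_left_injective d)).symm
    _ ≤ denum g (m + n) :=
        Set.ncard_le_ncard (Set.image_subset_iff.2 fun c hc => add_mem_fac hc hd)
          (fac_finite hpos _)

theorem stmt8_general {t : ℕ} (G : Fin (t + 1) → ℕ) (hpos : ∀ i, 0 < G i)
    (u : ℕ)
    (a b : ℕ) (hb : b ∈ Ap G u) :
    denum G a ≤ denum G (a + b) :=
  denum_le_denum_add hpos a hb.1

/-- If `g, g', g + g'` all lie in the Apery set `Ap(S; u)`, then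
`d(g + g'; G) ≥ d(g; G)` for any generating tuple `G` of `S`. -/
theorem stmt8 {t : ℕ} (G : Fin (t + 1) → ℕ) (hpos : ∀ i, 0 < G i)
    (hgcd : Finset.gcd Finset.univ G = 1)
    (u : ℕ) (hu : u ∈ Sg G) (hu0 : u ≠ 0)
    (a b : ℕ) (ha : a ∈ Ap G u) (hb : b ∈ Ap G u) (hab : a + b ∈ Ap G u) :
    denum G a ≤ denum G (a + b) :=
  stmt8_general G hpos u a b hb
end

section
/- Let S be a numerical semigroup and u ∈ S nonzero, with Ap(S; u) = {w₀ < w₁ < ⋯ < w_{u−1}}. Then S is symmetric if and only if wᵢ + w_j = w_{u−1} whenever i + j = u − 1. -/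
open Finset

/-! Every element of `T` is `a + k * u` with `a ∈ Ap(T;u)` determined by its residue mod `u`, so
an integer `z` lies in `T` iff `a ≤ z` for the Apéry element `a ≡ z`. Hence `F(T) = m - u` with
`m = max Ap(T;u)`, and symmetry says exactly that `a ↦ m - a` maps `Ap(T;u)` into itself. On the
increasing enumeration, `i ↦ m - w_{u-1-i}` is then strictly increasing with the same range as `w`,
so it is `w`. -/

theorem Int.ModEq.add_le_of_lt {n a b : ℤ} (h1 : a ≡ b [ZMOD n]) (h2 : a < b) : a + n ≤ b := by
  obtain ⟨k, hk⟩ := Int.modEq_iff_dvd.1 h1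
  rcases le_or_gt n 0 with hn | hn
  · linarith
  · have hk : 0 < k := pos_of_mul_pos_right (hk ▸ sub_pos.2 h2) hn.le
    nlinarith

@[simp]
lemma zmem_natCast {T : Set ℕ} {n : ℕ} : ZMem T n ↔ n ∈ T := by
  simp [ZMem]

lemma mem_apS_iff_zmem {T : Set ℕ} {u a : ℕ} :
    a ∈ ApS T u ↔ ZMem T a ∧ ¬ ZMem T ((a : ℤ) - u) := by
  have : ZMem T ((a : ℤ) - u) ↔ ∃ b ∈ T, a = b + u := by
    constructor
    · rintro ⟨hau, hmem⟩
      exact ⟨_, hmem, by omega⟩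
    · rintro ⟨b, hb, rfl⟩
      simpa using hb
  rw [this, zmem_natCast]
  rfl

lemma exists_mem_apS_add_mul {T : Set ℕ} {u : ℕ} (hu0 : 0 < u) {n : ℕ} (hn : n ∈ T) :
    ∃ a ∈ ApS T u, ∃ k, n = a + k * u := by
  induction n using Nat.strong_induction_on with
  | _ n ih =>
    by_cases h : ∃ b ∈ T, n = b + u
    · obtain ⟨b, hb, rfl⟩ := h
      obtain ⟨a, ha, k, rfl⟩ := ih b (by omega) hb
      exact ⟨a, ha, k + 1, by ring⟩
    · exact ⟨n, ⟨hn, h⟩, 0, by simp⟩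

namespace IsNumSemigroup

variable {T : Set ℕ} {u : ℕ}

lemma add_mul_mem (hT : IsNumSemigroup T) (hu : u ∈ T) {a : ℕ} (ha : a ∈ T) (k : ℕ) :
    a + k * u ∈ T := by
  induction k with
  | zero => simpa using ha
  | succ k ih => simpa [add_mul, ← add_assoc] using hT.add_mem _ ih _ hu

lemma exists_forall_ge_mem (hT : IsNumSemigroup T) : ∃ N, ∀ n, N ≤ n → n ∈ T := by
  obtain ⟨N, hN⟩ := hT.cofinite.bddAbove
  exact ⟨N + 1, fun n hn => by_contra fun h => by have := hN h; omega⟩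

lemma eq_of_mem_apS_of_modEq (hT : IsNumSemigroup T) (hu : u ∈ T) {a b : ℕ}
    (ha : a ∈ ApS T u) (hb : b ∈ ApS T u) (h : a ≡ b [MOD u]) : a = b := by
  wlog hab : a ≤ b generalizing a b
  · exact (this hb ha h.symm (by omega)).symm
  obtain ⟨k, hk⟩ := (Nat.modEq_iff_dvd' hab).1 h
  rcases k with _ | k
  · omega
  · refine absurd ⟨a + k * u, hT.add_mul_mem hu ha.1 k, ?_⟩ hb.2
    have : b = a + u * (k + 1) := by omega
    rw [this]
    ring

lemma exists_mem_apS_modEq (hT : IsNumSemigroup T) (hu0 : 0 < u) (z : ℤ) :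
    ∃ a ∈ ApS T u, (a : ℤ) ≡ z [ZMOD u] := by
  obtain ⟨N, hN⟩ := hT.exists_forall_ge_mem
  have hr : 0 ≤ z % u := Int.emod_nonneg z (by omega)
  obtain ⟨a, ha, k, hk⟩ :=
    exists_mem_apS_add_mul hu0 (hN ((z % u).toNat + N * u) (by nlinarith))
  refine ⟨a, ha, Int.modEq_iff_dvd.2 ⟨z / u - N + k, ?_⟩⟩
  have hk : (a : ℤ) = z % u + N * u - k * u := by
    rw [← Int.toNat_of_nonneg hr]
    omega
  linear_combination -hk - Int.emod_add_mul_ediv z u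

lemma zmem_iff_le_of_modEq (hT : IsNumSemigroup T) (hu : u ∈ T) (hu0 : 0 < u) {a : ℕ}
    (ha : a ∈ ApS T u) {z : ℤ} (h : (a : ℤ) ≡ z [ZMOD u]) : ZMem T z ↔ (a : ℤ) ≤ z := by
  constructor
  · rintro ⟨hz, hzT⟩
    obtain ⟨b, hb, k, hk⟩ := exists_mem_apS_add_mul hu0 hzT
    have hzb : z = b + k * u := by rw [← Int.toNat_of_nonneg hz]; exact_mod_cast hk
    have hba : (b : ℤ) ≡ a [ZMOD u] :=
      (Int.modEq_iff_dvd.2 ⟨k, by rw [hzb]; ring⟩).trans h.symm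
    rw [hT.eq_of_mem_apS_of_modEq hu hb ha (Int.natCast_modEq_iff.1 hba)] at hzb
    nlinarith
  · intro haz
    obtain ⟨k, hk⟩ := Int.modEq_iff_dvd.1 h
    lift k to ℕ using by nlinarith
    refine ⟨by omega, ?_⟩
    have : z.toNat = a + k * u := by zify; rw [Int.toNat_of_nonneg (by omega)]; linarith
    exact this ▸ hT.add_mul_mem hu ha.1 k

lemma frob_eq_of_isGreatest (hT : IsNumSemigroup T) (hu : u ∈ T) (hu0 : 0 < u) {m : ℕ}
    (hm : IsGreatest (ApS T u) m) : Frob T = m - u := by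
  refine IsGreatest.csSup_eq ⟨?_, fun z hz => ?_⟩
  · rw [Set.mem_ofPred_eq, hT.zmem_iff_le_of_modEq hu hu0 hm.1 (Int.modEq_iff_dvd.2 ⟨-1, by ring⟩)]
    omega
  · obtain ⟨a, ha, haz⟩ := hT.exists_mem_apS_modEq hu0 z
    have hza : z < a := not_le.1 (mt (hT.zmem_iff_le_of_modEq hu hu0 ha haz).2 hz)
    have := haz.symm.add_le_of_lt hza
    have : a ≤ m := hm.2 ha
    omega

lemma symm_iff_forall_sub_mem_apS (hT : IsNumSemigroup T) (hu : u ∈ T) (hu0 : 0 < u) {m : ℕ}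
    (hm : IsGreatest (ApS T u) m) : Symm T ↔ ∀ a ∈ ApS T u, m - a ∈ ApS T u := by
  rw [Symm, hT.frob_eq_of_isGreatest hu hu0 hm]
  constructor
  · intro hs a ha
    have ham : a ≤ m := hm.2 ha
    rw [mem_apS_iff_zmem] at ha ⊢
    push_cast [ham]
    exact ⟨(hs _ _ (by ring)).2 ha.2, by rw [hs _ a (by ring)]; exact not_not.2 ha.1⟩
  · intro h x y hxy
    obtain ⟨a, ha, hax⟩ := hT.exists_mem_apS_modEq hu0 x
    have ham : a ≤ m := hm.2 ha
    have hby : ((m - a : ℕ) : ℤ) ≡ y [ZMOD u] := by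
      obtain ⟨k, hk⟩ := Int.modEq_iff_dvd.1 hax
      exact Int.modEq_iff_dvd.2 ⟨-k - 1, by push_cast [ham]; linear_combination hxy - hk⟩
    rw [hT.zmem_iff_le_of_modEq hu hu0 ha hax, hT.zmem_iff_le_of_modEq hu hu0 (h a ha) hby]
    push_cast [ham]
    have hgap := hax.symm.add_le_of_lt
    constructor
    · intro hx; linarith
    · intro hy; by_contra hx; linarith [hgap (not_le.1 hx)]

end IsNumSemigroup

theorem StrictMono.add_rev_eq {n m : ℕ} {w : Fin n → ℕ} (hw : StrictMono w) (hm : ∀ i, w i ≤ m)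
    (h : ∀ i, ∃ j, w i + w j = m) (i : Fin n) : w i + w i.rev = m := by
  have hf : StrictMono fun k : Fin n => m - w k.rev := fun a b hab => by
    dsimp only
    have := hw (Fin.rev_lt_rev.2 hab)
    have := hm a.rev
    omega
  have hrange : Set.range (fun k : Fin n => m - w k.rev) = Set.range w := by
    ext x
    constructor
    · rintro ⟨k, rfl⟩
      obtain ⟨j, hj⟩ := h k.rev
      exact ⟨j, by dsimp only; omega⟩
    · rintro ⟨k, rfl⟩
      obtain ⟨j, hj⟩ := h k
      exact ⟨j.rev, by simp only [Fin.rev_rev]; omega⟩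
  have := congrFun ((hf.range_inj hw).1 hrange) i
  have := hm i.rev
  omega

/-- Proposition 4.5, (1) ↔ (2): `S` is symmetric iff `wᵢ + w_j = w_{u-1}` whenever
`i + j = u - 1`, where `Ap(S;u) = {w₀ < w₁ < ⋯ < w_{u-1}}`. -/
theorem stmt9 (T : Set ℕ) (hT : IsNumSemigroup T) (u : ℕ) (hu : u ∈ T) (hu0 : u ≠ 0)
    (w : Fin u → ℕ) (hw : StrictMono w) (hrange : Set.range w = ApS T u) :
    Symm T ↔
      ∀ i j : Fin u, (i : ℕ) + (j : ℕ) + 1 = u →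
        w i + w j = w ⟨u - 1, by omega⟩ := by
  set m := w ⟨u - 1, by omega⟩
  have hwm : ∀ i, w i ≤ m := fun i => hw.monotone (Fin.le_def.2 (by simp; omega))
  have hm : IsGreatest (ApS T u) m :=
    hrange ▸ ⟨Set.mem_range_self _, Set.forall_mem_range.2 hwm⟩
  have hrev : ∀ i j : Fin u, (i : ℕ) + j + 1 = u ↔ j = i.rev := by
    intro i j
    rw [Fin.ext_iff, Fin.val_rev]
    omega
  rw [hT.symm_iff_forall_sub_mem_apS hu (Nat.pos_of_ne_zero hu0) hm, ← hrange,
    Set.forall_mem_range]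
  simp only [hrev, forall_eq]
  constructor
  · intro h
    refine hw.add_rev_eq hwm fun i => ?_
    obtain ⟨j, hj⟩ := h i
    exact ⟨j, by have := hwm i; omega⟩
  · intro h i
    exact ⟨i.rev, by have := h i; omega⟩
end

section
/- Let S = ⟨e, e+d, e+2d, …, e+td⟩ be generated by an arithmetic sequence with gcd(e,d) = 1 and t < e. Then d_max(S) equals the number of partitions of e − 1 into parts of size at most t. -/
open Finset

/-! Write a factorization `c` over `e, e + d, …, e + t d` as `∑ c i * (e + i d) = L e + m d` with
length `L = ∑ c i` and weight `m = ∑ i * c i ≤ t L`. Trading `e` copies of `d` for `d` copies of `e`,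
every element can be written as `L e + m d` with `m < e` and `m ≤ t L`, and since `gcd(e, d) = 1` no
factorization is longer than this `L`. The maximal-length factorizations are then the vectors of
length `L` and weight `m`, i.e. the partitions of `m ≤ e - 1` into at most `L` parts of size at
most `t`. Their number is at most the number of partitions of `e - 1` into parts of size at
most `t`, with equality at `e * e + (e - 1) * d`. -/
namespace Nat.Partition

lemma card_parts_le {m : ℕ} (p : Nat.Partition m) : Multiset.card p.parts ≤ m := by
  simpa [p.parts_sum] using Multiset.card_nsmul_le_sum (a := 1) fun _ hx => p.parts_pos hx

lemma count_parts_zero {m : ℕ} (p : Nat.Partition m) : p.parts.count 0 = 0 :=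
  Multiset.count_eq_zero.mpr fun h => (p.parts_pos h).ne' rfl

lemma ncard_setOf_forall_le_mono {m m' t : ℕ} (ht : 1 ≤ t) (hm : m ≤ m') :
    {p : Nat.Partition m | ∀ x ∈ p.parts, x ≤ t}.ncard
      ≤ {p : Nat.Partition m' | ∀ x ∈ p.parts, x ≤ t}.ncard := by
  let pad (p : Nat.Partition m) : Nat.Partition m' :=
    { parts := p.parts + Multiset.replicate (m' - m) 1
      parts_pos := by
        simp only [Multiset.mem_add, Multiset.mem_replicate]
        rintro _ (hx | ⟨-, rfl⟩)
        exacts [p.parts_pos hx, one_pos]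
      parts_sum := by simp [p.parts_sum, hm] }
  refine Set.ncard_le_ncard_of_injOn pad ?_ ?_
  · intro p hp x hx
    simp only [pad, Multiset.mem_add, Multiset.mem_replicate] at hx
    rcases hx with hx | ⟨-, rfl⟩
    exacts [hp x hx, ht]
  · intro p _ q _ hpq
    exact Nat.Partition.ext (add_right_cancel (congrArg Nat.Partition.parts hpq))

end Nat.Partition

lemma Multiset.ncard_bounded_eq_ncard_partitions (t L m : ℕ) :
    {s : Multiset ℕ | (∀ x ∈ s, x ≤ t) ∧ Multiset.card s = L ∧ s.sum = m}.ncard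
      = {p : Nat.Partition m | (∀ x ∈ p.parts, x ≤ t) ∧ Multiset.card p.parts ≤ L}.ncard := by
  let padZeros (p : Nat.Partition m) : Multiset ℕ :=
    p.parts + Multiset.replicate (L - Multiset.card p.parts) 0
  have hinj : Set.InjOn padZeros {p | (∀ x ∈ p.parts, x ≤ t) ∧ Multiset.card p.parts ≤ L} := by
    intro p _ q _ hpq
    ext1
    ext x
    rcases eq_or_ne x 0 with rfl | hx
    · rw [p.count_parts_zero, q.count_parts_zero]
    · simpa [padZeros, Multiset.count_replicate, hx.symm] using congrArg (Multiset.count x) hpq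
  rw [← hinj.ncard_image]
  congr 1
  ext s
  constructor
  · rintro ⟨hst, rfl, rfl⟩
    refine ⟨Nat.Partition.ofSums _ s rfl, ⟨fun x hx => hst x (Multiset.mem_of_mem_filter hx),
      Multiset.card_le_card (Multiset.filter_le _ _)⟩, ?_⟩
    have hsplit := Multiset.filter_add_not (· ≠ 0) s
    simp only [not_not, Multiset.filter_eq' s 0] at hsplit
    have hcard := congrArg Multiset.card hsplit
    rw [Multiset.card_add, Multiset.card_replicate] at hcard
    simp only [padZeros, Nat.Partition.ofSums_parts]
    rwa [← hcard, Nat.add_sub_cancel_left]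
  · rintro ⟨p, ⟨hpt, hpL⟩, rfl⟩
    refine ⟨?_, ?_, ?_⟩
    · simp only [padZeros, Multiset.mem_add, Multiset.mem_replicate]
      rintro x (hx | ⟨-, rfl⟩)
      exacts [hpt x hx, Nat.zero_le t]
    · simp [padZeros, hpL]
    · simp [padZeros, p.parts_sum]

namespace ArithSemigroup

variable {t : ℕ}

def weight (c : Fin (t + 1) → ℕ) : ℕ := ∑ i : Fin (t + 1), (i : ℕ) * c i

lemma weight_le_mul_sum (c : Fin (t + 1) → ℕ) : weight c ≤ t * ∑ i, c i := by
  rw [weight, Finset.mul_sum]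
  exact Finset.sum_le_sum fun i _ => Nat.mul_le_mul_right _ (Fin.is_le i)

lemma weight_add_single (c : Fin (t + 1) → ℕ) (j : Fin (t + 1)) :
    weight (c + Pi.single j 1) = weight c + j := by
  simp [weight, mul_add, Finset.sum_add_distrib, Pi.single_apply]

lemma exists_sum_weight_eq {L m : ℕ} (h : m ≤ t * L) :
    ∃ c : Fin (t + 1) → ℕ, ∑ i, c i = L ∧ weight c = m := by
  induction L generalizing m with
  | zero =>
    obtain rfl : m = 0 := by simpa using h
    exact ⟨0, by simp, by simp [weight]⟩
  | succ L ih =>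
    obtain ⟨c, hcL, hcm⟩ := ih (m := m - min m t) (by rw [Nat.mul_succ] at h; omega)
    refine ⟨c + Pi.single ⟨min m t, by omega⟩ 1, ?_, ?_⟩
    · simp [Finset.sum_add_distrib, hcL]
    · rw [weight_add_single, hcm]
      exact Nat.sub_add_cancel (min_le_left m t)

def toMultiset (c : Fin (t + 1) → ℕ) : Multiset ℕ := ∑ i, Multiset.replicate (c i) (i : ℕ)

lemma card_toMultiset (c : Fin (t + 1) → ℕ) : Multiset.card (toMultiset c) = ∑ i, c i := by
  simp [toMultiset, Multiset.card_sum]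

lemma sum_toMultiset (c : Fin (t + 1) → ℕ) : (toMultiset c).sum = weight c := by
  simp [toMultiset, weight, Multiset.sum_sum, mul_comm]

lemma le_of_mem_toMultiset {c : Fin (t + 1) → ℕ} {x : ℕ} (hx : x ∈ toMultiset c) : x ≤ t := by
  obtain ⟨i, -, hi⟩ := Multiset.mem_sum.mp hx
  rw [Multiset.eq_of_mem_replicate hi]
  exact Fin.is_le i

lemma count_toMultiset (c : Fin (t + 1) → ℕ) (i : Fin (t + 1)) :
    (toMultiset c).count (i : ℕ) = c i := by
  rw [toMultiset, Multiset.count_sum', Finset.sum_eq_single i]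
  · simp
  · intro j _ hji
    simp [Multiset.count_replicate, Fin.val_ne_of_ne hji]
  · simp

lemma toMultiset_injective : Function.Injective (toMultiset (t := t)) := fun c c' h =>
  funext fun i => by rw [← count_toMultiset c, ← count_toMultiset c', h]

lemma toMultiset_count {s : Multiset ℕ} (hs : ∀ x ∈ s, x ≤ t) :
    toMultiset (fun i : Fin (t + 1) => s.count (i : ℕ)) = s := by
  ext x
  by_cases hx : x ≤ t
  · exact count_toMultiset _ ⟨x, Nat.lt_succ_of_le hx⟩
  · rw [Multiset.count_eq_zero.mpr fun h => hx (le_of_mem_toMultiset h),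
      Multiset.count_eq_zero.mpr fun h => hx (hs x h)]

lemma ncard_sum_weight_eq (L m : ℕ) :
    {c : Fin (t + 1) → ℕ | ∑ i, c i = L ∧ weight c = m}.ncard
      = {s : Multiset ℕ | (∀ x ∈ s, x ≤ t) ∧ Multiset.card s = L ∧ s.sum = m}.ncard := by
  rw [← toMultiset_injective.injOn.ncard_image]
  congr 1
  ext s
  constructor
  · rintro ⟨c, ⟨rfl, rfl⟩, rfl⟩
    exact ⟨fun _ => le_of_mem_toMultiset, card_toMultiset c, sum_toMultiset c⟩
  · rintro ⟨hst, rfl, rfl⟩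
    refine ⟨_, ⟨?_, ?_⟩, toMultiset_count hst⟩
    · rw [← card_toMultiset, toMultiset_count hst]
    · rw [← sum_toMultiset, toMultiset_count hst]

def arithGens (e d t : ℕ) : Fin (t + 1) → ℕ := fun i => e + (i : ℕ) * d

lemma mem_Fac_arithGens {e d n : ℕ} {c : Fin (t + 1) → ℕ} :
    c ∈ Fac (arithGens e d t) n ↔ (∑ i, c i) * e + weight c * d = n := by
  simp only [Fac, arithGens, weight, Set.mem_ofPred_eq, Finset.sum_mul, ← Finset.sum_add_distrib]
  exact Eq.congr_left (Finset.sum_congr rfl fun i _ => by ring)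

lemma le_of_add_mul_eq {e d L m L' m' : ℕ} (hed : Nat.Coprime e d) (hm : m < e)
    (h : L' * e + m' * d = L * e + m * d) : L' ≤ L := by
  by_contra! hL
  obtain ⟨k, rfl⟩ := Nat.exists_eq_add_of_lt hL
  have hmd : m * d = m' * d + e * (k + 1) := by linarith
  have hm' : m' < m := Nat.lt_of_mul_lt_mul_right (a := d) <| by
    have : 0 < e * (k + 1) := Nat.mul_pos (by omega) k.succ_pos
    omega
  have hdvd : e ∣ m - m' :=
    hed.dvd_of_dvd_mul_right ⟨k + 1, by rw [Nat.sub_mul, hmd, Nat.add_sub_cancel_left]⟩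
  have := Nat.le_of_dvd (Nat.sub_pos_of_lt hm') hdvd
  omega

lemma exists_reduced_add_mul_eq {e d : ℕ} (he : 0 < e) {L m : ℕ} (h : m ≤ t * L) :
    ∃ L' m', m' < e ∧ m' ≤ t * L' ∧ L' * e + m' * d = L * e + m * d := by
  induction m using Nat.strong_induction_on generalizing L with
  | _ m ih =>
    by_cases hme : m < e
    · exact ⟨L, m, hme, h, rfl⟩
    -- trade `e` copies of `d` for `d` copies of `e`
    have hlt : m - e < m := by omega
    have hle : m - e ≤ t * (L + d) := by rw [Nat.mul_add]; omega
    obtain ⟨L', m', hm', hmL', heq⟩ := ih (m - e) hlt hle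
    refine ⟨L', m', hm', hmL', heq.trans ?_⟩
    obtain ⟨k, rfl⟩ := Nat.exists_eq_add_of_le (not_lt.mp hme)
    rw [Nat.add_sub_cancel_left]
    ring

lemma exists_eq_of_mem_Sg {e d n : ℕ} (he : 0 < e) (hn : n ∈ Sg (arithGens e d t)) :
    ∃ L m, m < e ∧ m ≤ t * L ∧ L * e + m * d = n := by
  obtain ⟨c, hc⟩ := hn
  obtain ⟨L, m, hm, hmL, heq⟩ := exists_reduced_add_mul_eq (d := d) he (weight_le_mul_sum c)
  exact ⟨L, m, hm, hmL, heq.trans (mem_Fac_arithGens.mp hc)⟩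

lemma add_mul_mem_Sg {e d L m : ℕ} (h : m ≤ t * L) : L * e + m * d ∈ Sg (arithGens e d t) := by
  obtain ⟨c, hcL, hcm⟩ := exists_sum_weight_eq h
  exact ⟨c, mem_Fac_arithGens.mpr (by rw [hcL, hcm])⟩

lemma ordOf_arithGens {e d L m : ℕ} (hed : Nat.Coprime e d) (hm : m < e) (h : m ≤ t * L) :
    ordOf (arithGens e d t) (L * e + m * d) = L := by
  refine IsGreatest.csSup_eq ⟨?_, ?_⟩
  · obtain ⟨c, hcL, hcm⟩ := exists_sum_weight_eq h
    exact ⟨c, mem_Fac_arithGens.mpr (by rw [hcL, hcm]), hcL⟩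
  · rintro _ ⟨c, hc, rfl⟩
    exact le_of_add_mul_eq hed hm (mem_Fac_arithGens.mp hc)

lemma dmaxEl_arithGens {e d L m : ℕ} (hed : Nat.Coprime e d) (hd : 0 < d) (hm : m < e)
    (h : m ≤ t * L) :
    dmaxEl (arithGens e d t) (L * e + m * d)
      = {c : Fin (t + 1) → ℕ | ∑ i, c i = L ∧ weight c = m}.ncard := by
  rw [dmaxEl, ordOf_arithGens hed hm h]
  congr 1
  ext c
  simp only [mem_Fac_arithGens, Set.mem_ofPred_eq]
  constructor
  · rintro ⟨hc, hcL⟩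
    rw [hcL, Nat.add_left_cancel_iff] at hc
    exact ⟨hcL, Nat.eq_of_mul_eq_mul_right hd hc⟩
  · rintro ⟨hcL, hcm⟩
    exact ⟨by rw [hcL, hcm], hcL⟩

lemma dmaxEl_arithGens_eq_ncard_partitions {e d L m : ℕ} (hed : Nat.Coprime e d) (hd : 0 < d)
    (hm : m < e) (h : m ≤ t * L) :
    dmaxEl (arithGens e d t) (L * e + m * d)
      = {p : Nat.Partition m | (∀ x ∈ p.parts, x ≤ t) ∧ Multiset.card p.parts ≤ L}.ncard := by
  rw [dmaxEl_arithGens hed hd hm h, ncard_sum_weight_eq,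
    Multiset.ncard_bounded_eq_ncard_partitions]

end ArithSemigroup

open ArithSemigroup

/-- Proposition 4.15: if `S = ⟨e, e+d, …, e+td⟩` with `gcd(e,d) = 1`, then `d_max(S)` is
the number of partitions of `e - 1` into parts of size at most `t`. -/
theorem stmt17 (e d t : ℕ) (ht : 0 < t) (hte : t < e) (hgcd : Nat.gcd e d = 1) :
    dmax (fun i : Fin (t + 1) => e + (i : ℕ) * d) =
      {p : Nat.Partition (e - 1) | ∀ x ∈ p.parts, x ≤ t}.ncard := by
  have hd : 0 < d := Nat.pos_of_ne_zero fun hd => by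
    rw [hd, Nat.gcd_zero_right] at hgcd
    omega
  have hfeas : e - 1 ≤ t * e := (Nat.sub_le e 1).trans (Nat.le_mul_of_pos_left e ht)
  show dmax (arithGens e d t) = _
  refine IsGreatest.csSup_eq ⟨⟨e * e + (e - 1) * d, add_mul_mem_Sg hfeas, ?_⟩, ?_⟩
  · rw [dmaxEl_arithGens_eq_ncard_partitions hgcd hd (by omega) hfeas]
    congr 1
    ext p
    exact and_iff_left (p.card_parts_le.trans (Nat.sub_le e 1))
  · rintro _ ⟨n, hn, rfl⟩
    obtain ⟨L, m, hm, hmL, rfl⟩ := exists_eq_of_mem_Sg (by omega) hn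
    rw [dmaxEl_arithGens_eq_ncard_partitions hgcd hd hm hmL]
    exact (Set.ncard_le_ncard (fun p hp => hp.1) (Set.toFinite _)).trans
      (Nat.Partition.ncard_setOf_forall_le_mono ht (by omega))
end
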